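/- Let $M$ be a real number, $G$ a finite abelian group, and $f$ a non-constant real-valued function on $G$. Let $E$ be a linear homogeneous equation in $k \ge 3$ variables with integer coefficients each coprime to $|G|$. If $k$ is even and $\Lambda_E[\tilde{f}] \ge M^{k-2}\|\tilde{f}\|_2^2$, then $\max_{g \in G} \tilde{f}(g) \ge M$, and consequently $\max_{g \in G} f(g) \ge \mathbb{E} f + M$. -/

import Mathlib

open scoped BigOperators

/-- `𝔼 f`: the average of a real-valued function over a (finite) type. -/
noncomputable def expect {G : Type*} (f : G → ℝ) : ℝ :=
  (∑ᶠ g, f g) / Nat.card G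

/-- The balanced part `f̃ = f - 𝔼 f` of `f`. -/
noncomputable def balanced {G : Type*} (f : G → ℝ) : G → ℝ :=
  fun g => f g - expect f

/-- `Λ_E[f]` for the linear homogeneous equation `E : c 0 • x 0 + ⋯ + c (k-1) • x (k-1) = 0`:
the average of `f (x 0) ⋯ f (x (k-1))` over the solution set of `E`. -/
noncomputable def lam {G : Type*} [AddCommGroup G] {k : ℕ} (c : Fin k → ℤ) (f : G → ℝ) : ℝ :=
  (∑ᶠ x ∈ {x : Fin k → G | ∑ i, c i • x i = 0}, ∏ i, f (x i)) /
    Nat.card {x : Fin k → G // ∑ i, c i • x i = 0}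

/-- `f|V`: the coset-average of `f`, as a function on the quotient `M ⧸ V`. -/
noncomputable def quotFn {F M : Type*} [Field F] [AddCommGroup M] [Module F M]
    (V : Submodule F M) (f : M → ℝ) : (M ⧸ V) → ℝ :=
  fun x => (∑ᶠ g ∈ {g : M | (Submodule.Quotient.mk g : M ⧸ V) = x}, f g) / Nat.card V

/-- `‖f‖₂² = 𝔼(f²)`. -/
noncomputable def norm2sq {G : Type*} (f : G → ℝ) : ℝ :=
  expect (fun g => f g ^ 2)

/-! Write `g = f̃` and `m = max g`; then `Σ g = 0`, so `m ≥ 0`. Expanding the indicator of the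
equation in characters gives `|G| Σ_{x ∈ S} ∏ g(x_i) = Σ_ψ ∏_i ĝ(c_i ψ)`, and since every `c_i` is
coprime to `|G|`, each `ψ ↦ c_i ψ` permutes the dual group. For `ψ ≠ 0` we have
`ĝ(ψ) = Σ (g - m) ψ`, so `|ĝ(ψ)| ≤ Σ (m - g) = |G| m` (and `ĝ(0) = 0`). Bounding all but two factors
in this way and the last two by Cauchy–Schwarz and Parseval gives `Λ_E[g] ≤ m^(k-2) ‖g‖₂²`, which
against the hypothesis and `‖g‖₂ > 0` forces `M ≤ m`. -/

open Finset hiding expect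

lemma zsmul_bijective_of_isCoprime {H : Type*} [AddCommGroup H] [Finite H] {c : ℤ}
    (hc : IsCoprime c (Nat.card H)) : Function.Bijective (fun x : H => c • x) := by
  obtain ⟨a, b, hab⟩ := hc
  have hinv : ∀ x : H, a • c • x = x := fun x => by
    have hcard : (Nat.card H : ℤ) • x = 0 := by rw [natCast_zsmul, card_nsmul_eq_zero']
    calc a • c • x = (a * c + b * Nat.card H) • x := by
          rw [add_smul, mul_smul b, hcard, smul_zero, add_zero, mul_smul]
      _ = x := by rw [hab, one_smul]
  refine Function.bijective_iff_has_inverse.2 ⟨fun y => a • y, hinv, fun y => ?_⟩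
  simp only [smul_comm c a y, hinv]

lemma AddChar.map_sum_eq_prod {A M ι : Type*} [AddCommMonoid A] [CommMonoid M]
    (ψ : AddChar A M) (s : Finset ι) (x : ι → A) : ψ (∑ i ∈ s, x i) = ∏ i ∈ s, ψ (x i) := by
  have := map_prod ψ.toMonoidHom (fun i => Multiplicative.ofAdd (x i)) s
  rwa [← ofAdd_sum] at this

lemma prod_le_pow_mul_mul {j : ℕ} {B : ℝ} (x : Fin (j + 2) → ℝ) (hx : ∀ i, 0 ≤ x i)
    (hB : ∀ i, x i ≤ B) : ∏ i, x i ≤ B ^ j * (x 0 * x 1) := by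
  have hrest : ∏ i : Fin j, x i.succ.succ ≤ B ^ j := by
    simpa using prod_le_prod (s := univ) (fun (i : Fin j) _ => hx i.succ.succ)
      fun i _ => hB i.succ.succ
  rw [Fin.prod_univ_succ, Fin.prod_univ_succ, ← mul_assoc, mul_comm]
  exact mul_le_mul_of_nonneg_right hrest (mul_nonneg (hx 0) (hx _))

section Fourier

variable {G : Type*} [AddCommGroup G] [Fintype G]

noncomputable def fourierSum (F : G → ℂ) (ψ : AddChar G ℂ) : ℂ := ∑ x, F x * ψ x

lemma fourierSum_zsmul (F : G → ℂ) (c : ℤ) (ψ : AddChar G ℂ) :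
    fourierSum F (c • ψ) = ∑ x, F x * ψ (c • x) := by
  simp only [fourierSum, AddChar.zsmul_apply, AddChar.map_zsmul_eq_zpow]

lemma addChar_zsmul_bijective {c : ℤ} (hc : IsCoprime c (Nat.card G)) :
    Function.Bijective (fun ψ : AddChar G ℂ => c • ψ) :=
  zsmul_bijective_of_isCoprime (by rwa [Nat.card_eq_fintype_card, AddChar.card_eq,
    ← Nat.card_eq_fintype_card])

lemma sum_norm_fourierSum_sq (F : G → ℂ) :
    ∑ ψ : AddChar G ℂ, ‖fourierSum F ψ‖ ^ 2 = Fintype.card G * ∑ x, ‖F x‖ ^ 2 := by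
  classical
  have hexpand : ∀ ψ : AddChar G ℂ, ((‖fourierSum F ψ‖ ^ 2 : ℝ) : ℂ)
      = ∑ a, ∑ b, F a * (starRingEnd ℂ) (F b) * ψ (a - b) := fun ψ => by
    rw [Complex.ofReal_pow, ← Complex.mul_conj', fourierSum, map_sum, sum_mul_sum]
    refine sum_congr rfl fun a _ => sum_congr rfl fun b _ => ?_
    rw [map_mul, ← AddChar.map_neg_eq_conj, sub_eq_add_neg, AddChar.map_add_eq_mul]
    ring
  apply Complex.ofReal_injective
  rw [Complex.ofReal_sum, sum_congr rfl fun ψ _ => hexpand ψ, sum_comm]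
  simp_rw [sum_comm (γ := AddChar G ℂ), ← mul_sum, AddChar.sum_apply_eq_ite, sub_eq_zero]
  push_cast
  simp [mul_sum, ← Complex.mul_conj', mul_comm]

lemma norm_fourierSum_le {g : G → ℝ} {m : ℝ} (hgm : ∀ x, g x ≤ m) (hsum : ∑ x, g x = 0)
    (ψ : AddChar G ℂ) : ‖fourierSum (fun x => (g x : ℂ)) ψ‖ ≤ Fintype.card G * m := by
  have hdev : ∑ x, ‖((g x - m : ℝ) : ℂ) * ψ x‖ = Fintype.card G * m := by
    simp_rw [norm_mul, AddChar.norm_apply, mul_one, Complex.norm_real, Real.norm_eq_abs,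
      abs_of_nonpos (sub_nonpos.2 (hgm _)), neg_sub, sum_sub_distrib, hsum, sum_const, card_univ,
      nsmul_eq_mul, sub_zero]
  rcases eq_or_ne ψ 0 with rfl | hψ
  · simp only [fourierSum, AddChar.zero_apply, mul_one]
    rw [← Complex.ofReal_sum, hsum, Complex.ofReal_zero, norm_zero, ← hdev]
    positivity
  · have hshift : fourierSum (fun x => (g x : ℂ)) ψ = ∑ x, ((g x - m : ℝ) : ℂ) * ψ x := by
      simp only [Complex.ofReal_sub, sub_mul, sum_sub_distrib, ← mul_sum,
        AddChar.sum_eq_zero_iff_ne_zero.2 hψ, mul_zero, sub_zero, fourierSum]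
    rw [hshift, ← hdev]
    exact norm_sum_le _ _

lemma sum_norm_fourierSum_zsmul_mul_le (F : G → ℂ) {a b : ℤ} (ha : IsCoprime a (Nat.card G))
    (hb : IsCoprime b (Nat.card G)) :
    ∑ ψ : AddChar G ℂ, ‖fourierSum F (a • ψ)‖ * ‖fourierSum F (b • ψ)‖
      ≤ Fintype.card G * ∑ x, ‖F x‖ ^ 2 := by
  have hreindex : ∀ {c : ℤ}, IsCoprime c (Nat.card G) →
      ∑ ψ : AddChar G ℂ, ‖fourierSum F (c • ψ)‖ ^ 2 = Fintype.card G * ∑ x, ‖F x‖ ^ 2 :=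
    fun hc => ((addChar_zsmul_bijective hc).sum_comp fun ψ => ‖fourierSum F ψ‖ ^ 2).trans
      (sum_norm_fourierSum_sq F)
  calc _ ≤ √(∑ ψ : AddChar G ℂ, ‖fourierSum F (a • ψ)‖ ^ 2)
        * √(∑ ψ : AddChar G ℂ, ‖fourierSum F (b • ψ)‖ ^ 2) := Real.sum_mul_le_sqrt_mul_sqrt _ _ _
    _ = Fintype.card G * ∑ x, ‖F x‖ ^ 2 := by
      rw [hreindex ha, hreindex hb, Real.mul_self_sqrt (by positivity)]

variable [DecidableEq G] {k : ℕ}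

def solutions (c : Fin k → ℤ) : Finset (Fin k → G) :=
  univ.filter fun x => ∑ i, c i • x i = 0

lemma card_mul_sum_solutions (c : Fin k → ℤ) (F : G → ℂ) :
    Fintype.card G * ∑ x ∈ solutions c, ∏ i, F (x i)
      = ∑ ψ : AddChar G ℂ, ∏ i, fourierSum F (c i • ψ) := by
  have hexpand : ∀ ψ : AddChar G ℂ, ∏ i, fourierSum F (c i • ψ)
      = ∑ x : Fin k → G, (∏ i, F (x i)) * ψ (∑ i, c i • x i) := fun ψ => by
    simp_rw [fourierSum_zsmul, prod_univ_sum, Fintype.piFinset_univ, AddChar.map_sum_eq_prod,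
      prod_mul_distrib]
  simp_rw [hexpand, sum_comm (γ := AddChar G ℂ), ← mul_sum, AddChar.sum_apply_eq_ite, mul_ite,
    mul_zero, ← sum_filter, solutions, mul_sum, mul_comm]

lemma card_solutions (c : Fin k → ℤ) {i₀ : Fin k} (hc : IsCoprime (c i₀) (Nat.card G)) :
    #(solutions (G := G) c) = Fintype.card G ^ (k - 1) := by
  have hterm : ∀ ψ : AddChar G ℂ, ∏ i, fourierSum (fun _ => 1) (c i • ψ)
      = if ψ = 0 then (Fintype.card G : ℂ) ^ k else 0 := fun ψ => by
    split_ifs with hψ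
    · simp [hψ, fourierSum]
    · refine prod_eq_zero (mem_univ i₀) ?_
      simp only [fourierSum, one_mul, AddChar.sum_eq_zero_iff_ne_zero]
      exact fun h => hψ ((addChar_zsmul_bijective hc).injective (h.trans (zsmul_zero _).symm))
  have h := card_mul_sum_solutions (G := G) c fun _ => 1
  simp only [prod_const_one, sum_const, nsmul_one, hterm, sum_ite_eq', mem_univ, if_true] at h
  rw [← pow_sub_one_mul i₀.pos.ne', mul_comm, mul_left_inj' (by simp)] at h
  exact_mod_cast h

lemma sum_solutions_prod_le (hk : 2 ≤ k) (c : Fin k → ℤ) (hc : ∀ i, IsCoprime (c i) (Nat.card G))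
    {g : G → ℝ} {m : ℝ} (hgm : ∀ x, g x ≤ m) (hsum : ∑ x, g x = 0) :
    ∑ x ∈ solutions c, ∏ i, g (x i) ≤ (Fintype.card G * m) ^ (k - 2) * ∑ x, g x ^ 2 := by
  obtain ⟨j, rfl⟩ := Nat.exists_eq_add_of_le' hk
  rw [Nat.add_sub_cancel]
  set n : ℝ := (Fintype.card G : ℝ)
  set F : G → ℂ := fun x => (g x : ℂ)
  have hnm : 0 ≤ n * m := (norm_nonneg _).trans (norm_fourierSum_le hgm hsum 0)
  have hF : ∑ x, ‖F x‖ ^ 2 = ∑ x, g x ^ 2 := by simp [F]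
  have hcast : (((n * ∑ x ∈ solutions c, ∏ i, g (x i) : ℝ)) : ℂ)
      = Fintype.card G * ∑ x ∈ solutions c, ∏ i, F (x i) := by push_cast; rfl
  refine le_of_mul_le_mul_left ?_ (show (0 : ℝ) < n by positivity)
  calc n * ∑ x ∈ solutions c, ∏ i, g (x i)
      ≤ ‖(((n * ∑ x ∈ solutions c, ∏ i, g (x i) : ℝ)) : ℂ)‖ := by
        rw [Complex.norm_real, Real.norm_eq_abs]; exact le_abs_self _
    _ = ‖∑ ψ : AddChar G ℂ, ∏ i, fourierSum F (c i • ψ)‖ := by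
        rw [hcast, card_mul_sum_solutions]
    _ ≤ ∑ ψ : AddChar G ℂ, ∏ i, ‖fourierSum F (c i • ψ)‖ :=
        (norm_sum_le _ _).trans (sum_le_sum fun ψ _ => norm_prod_le _ _)
    _ ≤ ∑ ψ : AddChar G ℂ, (n * m) ^ j * (‖fourierSum F (c 0 • ψ)‖ * ‖fourierSum F (c 1 • ψ)‖) :=
        sum_le_sum fun ψ _ => prod_le_pow_mul_mul _ (fun _ => norm_nonneg _)
          fun i => norm_fourierSum_le hgm hsum _
    _ = (n * m) ^ j * ∑ ψ : AddChar G ℂ, ‖fourierSum F (c 0 • ψ)‖ * ‖fourierSum F (c 1 • ψ)‖ := by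
        rw [mul_sum]
    _ ≤ (n * m) ^ j * (n * ∑ x, g x ^ 2) := by
        rw [← hF]; gcongr; exact sum_norm_fourierSum_zsmul_mul_le F (hc 0) (hc 1)
    _ = n * ((n * m) ^ j * ∑ x, g x ^ 2) := by ring

lemma lam_eq_sum_solutions_div (c : Fin k → ℤ) (f : G → ℝ) :
    lam c f = (∑ x ∈ solutions c, ∏ i, f (x i)) / #(solutions (G := G) c) := by
  rw [lam, Nat.card_eq_fintype_card, Fintype.card_subtype, ← finsum_mem_coe_finset, solutions,
    coe_filter]
  simp only [mem_univ, true_and]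

end Fourier

section Balanced

variable {G : Type*} [Fintype G]

lemma expect_eq_sum_div (f : G → ℝ) : expect f = (∑ x, f x) / Fintype.card G := by
  rw [expect, finsum_eq_sum_of_fintype, Nat.card_eq_fintype_card]

lemma sum_balanced [Nonempty G] (f : G → ℝ) : ∑ x, balanced f x = 0 := by
  simp only [balanced, sum_sub_distrib, sum_const, card_univ, nsmul_eq_mul, expect_eq_sum_div]
  field_simp
  ring

lemma exists_balanced_ne_zero {f : G → ℝ} (hf : ∃ a b, f a ≠ f b) : ∃ x, balanced f x ≠ 0 := by
  obtain ⟨a, b, hab⟩ := hf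
  by_contra! h
  simp only [balanced, sub_eq_zero] at h
  exact hab ((h a).trans (h b).symm)

lemma norm2sq_pos {g : G → ℝ} (hg : ∃ x, g x ≠ 0) : 0 < norm2sq g := by
  obtain ⟨x, hx⟩ := hg
  have : Nonempty G := ⟨x⟩
  rw [norm2sq, expect_eq_sum_div]
  exact div_pos (sum_pos' (fun y _ => sq_nonneg _) ⟨x, mem_univ x, by positivity⟩)
    (by simp [Fintype.card_pos])

end Balanced

lemma lam_le_pow_mul_norm2sq {G : Type*} [AddCommGroup G] [Fintype G] {k : ℕ} (hk : 2 ≤ k)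
    (c : Fin k → ℤ) (hc : ∀ i, IsCoprime (c i) (Nat.card G)) {g : G → ℝ} {m : ℝ}
    (hgm : ∀ x, g x ≤ m) (hsum : ∑ x, g x = 0) :
    lam c g ≤ m ^ (k - 2) * norm2sq g := by
  classical
  have hn : (0 : ℝ) < Fintype.card G := by simp [Fintype.card_pos]
  rw [lam_eq_sum_solutions_div, card_solutions c (hc ⟨0, by omega⟩), norm2sq, expect_eq_sum_div,
    Nat.cast_pow, div_le_iff₀ (by positivity)]
  calc _ ≤ (Fintype.card G * m) ^ (k - 2) * ∑ x, g x ^ 2 := sum_solutions_prod_le hk c hc hgm hsum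
    _ = _ := by
      rw [mul_pow, ← Nat.sub_add_cancel (show 1 ≤ k - 1 by omega), pow_succ, Nat.sub_sub]
      field_simp

theorem stmt_8_general (M : ℝ) {G : Type*} [AddCommGroup G] [Finite G]
    (f : G → ℝ) (hf : ∃ a b : G, f a ≠ f b)
    {k : ℕ} (hk : 3 ≤ k) (c : Fin k → ℤ)
    (hc : ∀ i, IsCoprime (c i) (Nat.card G : ℤ))
    (hlam : lam c (balanced f) ≥ M ^ (k - 2) * norm2sq (balanced f)) :
    (∃ g : G, balanced f g ≥ M) ∧ (∃ g : G, f g ≥ expect f + M) := by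
  cases nonempty_fintype G
  obtain ⟨x₀, -, hmax⟩ := exists_max_image univ (balanced f) univ_nonempty
  obtain ⟨x₁, -, hx₁⟩ := exists_le_of_sum_le (f := 0) (g := balanced f)
    univ_nonempty (by simp [sum_balanced f])
  have hM : M ≤ balanced f x₀ := by
    have hpow := hlam.trans (lam_le_pow_mul_norm2sq (by omega) c hc
      (fun x => hmax x (mem_univ x)) (sum_balanced f))
    exact le_of_pow_le_pow_left₀ (by omega) (hx₁.trans (hmax x₁ (mem_univ x₁)))
      (le_of_mul_le_mul_right hpow (norm2sq_pos (exists_balanced_ne_zero hf)))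
  exact ⟨⟨x₀, hM⟩, x₀, by unfold balanced at hM; linarith⟩

theorem stmt_8 (M : ℝ) {G : Type*} [AddCommGroup G] [Finite G]
    (f : G → ℝ) (hf : ∃ a b : G, f a ≠ f b)
    {k : ℕ} (hk : 3 ≤ k) (c : Fin k → ℤ)
    (hc : ∀ i, IsCoprime (c i) (Nat.card G : ℤ))
    (heven : Even k)
    (hlam : lam c (balanced f) ≥ M ^ (k - 2) * norm2sq (balanced f)) :
    (∃ g : G, balanced f g ≥ M) ∧ (∃ g : G, f g ≥ expect f + M) :=
  stmt_8_general M f hf hk c hc hlam
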